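/- arXiv:2004.14895 — 3 statements merged into one kernel-verified Lean document; each statement's English description precedes it below -/
import Mathlib

section
/- Let (A, ·, 1, ≤) be a preordered monoid with positive cone P = {a ∈ A | 1 ≤ a}. Then the relation ≤_P is compatible with the monoid operation (that is, a ≤_P b and c ≤_P d imply a·c ≤_P b·d) if and only if P is right normal in A. -/
/-- Let `(A, ·, 1, ≤)` be a preordered monoid with positive cone
`P = {a | 1 ≤ a}`. Then the relation `≤_P` (`a ≤_P b` iff `b = x·a` for some `x ∈ P`)
is compatible with the monoid operation iff `P` is right normal in `A`
(`a·P ⊆ P·a` for all `a`). -/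
theorem stmt1 {A : Type*} [Monoid A] [Preorder A]
    (hcomp : ∀ a b c d : A, a ≤ b → c ≤ d → a * c ≤ b * d) :
    (∀ a b c d : A,
        (∃ x : A, 1 ≤ x ∧ b = x * a) → (∃ y : A, 1 ≤ y ∧ d = y * c) →
        ∃ z : A, 1 ≤ z ∧ b * d = z * (a * c)) ↔
    (∀ a m : A, 1 ≤ m → ∃ m' : A, 1 ≤ m' ∧ a * m = m' * a) := by
  constructor
  · intro h a m hm
    obtain ⟨z, hz, hez⟩ := h a a 1 m ⟨1, le_refl 1, (one_mul a).symm⟩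
      ⟨m, hm, (mul_one m).symm⟩
    exact ⟨z, hz, by simpa using hez⟩
  · intro h a b c d ⟨x, hx, hb⟩ ⟨y, hy, hd⟩
    obtain ⟨y', hy', he⟩ := h a y hy
    refine ⟨x * y', by simpa using hcomp 1 x 1 y' hx hy', ?_⟩
    subst hb hd
    rw [mul_assoc x, ← mul_assoc a, he, mul_assoc, mul_assoc]
end

section
/- Let S be a submonoid of a monoid A, let S' be a submonoid of a monoid A', and let f : A → A' be a monoid homomorphism. Then f is monotone with respect to the relations ≤_S on A and ≤_{S'} on A' (i.e., a ≤_S b implies f(a) ≤_{S'} f(b)) if and only if f(S) ⊆ S'. -/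
/-- Let `S ≤ A`, `S' ≤ A'` be submonoids and `f : A → A'` a
monoid homomorphism. Then `f` is monotone with respect to `≤_S` and `≤_{S'}`
iff `f(S) ⊆ S'`. -/
theorem stmt5 {A A' : Type*} [Monoid A] [Monoid A']
    (S : Submonoid A) (S' : Submonoid A') (f : A →* A') :
    (∀ a b : A, (∃ m ∈ S, b = m * a) → ∃ m' ∈ S', f b = m' * f a) ↔
      (∀ x ∈ S, f x ∈ S') := by
  constructor
  · intro h x hx
    obtain ⟨m', hm', hx'⟩ := h 1 x ⟨x, hx, (mul_one x).symm⟩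
    simpa [hx'] using hm'
  · rintro h a b ⟨m, hm, rfl⟩
    exact ⟨f m, h m hm, by simp⟩
end

section
/- Let (B, ·, 1, ≤) be a preordered monoid and let q : B → C be a surjective monoid homomorphism. Let R be the transitive closure of the relation {(q(b), q(b')) | b, b' ∈ B, b ≤ b'} on C. Then R is a preorder on C compatible with the monoid operation (so (C, R) is a preordered monoid), q is monotone, and for every preordered monoid D and monoid homomorphism h : C → D, h is monotone if and only if h ∘ q is monotone. -/
/-- Let `(B, ·, 1, ≤)` be a preordered monoid and `q : B → C` a
surjective monoid homomorphism. The transitive closure `R` of the image of `≤`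
under `q` is a preorder on `C` compatible with the monoid operation, `q` is
monotone, and a monoid homomorphism `h : C → D` into a preordered monoid `D` is
monotone iff `h ∘ q` is monotone. -/
theorem stmt8 {B C : Type*} [Monoid B] [Preorder B] [Monoid C]
    (hcompB : ∀ a b c d : B, a ≤ b → c ≤ d → a * c ≤ b * d)
    (q : B →* C) (hq : Function.Surjective q)
    (R : C → C → Prop)
    (hR : R = Relation.TransGen (fun c c' : C => ∃ b b' : B, b ≤ b' ∧ c = q b ∧ c' = q b')) :
    Reflexive R ∧ Transitive R ∧
    (∀ x x' y y' : C, R x x' → R y y' → R (x * y) (x' * y')) ∧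
    (∀ b b' : B, b ≤ b' → R (q b) (q b')) ∧
    (∀ (D : Type*) (_ : Monoid D) (_ : Preorder D),
      (∀ a b c d : D, a ≤ b → c ≤ d → a * c ≤ b * d) →
      ∀ h : C →* D,
        ((∀ c c' : C, R c c' → h c ≤ h c') ↔
          (∀ b b' : B, b ≤ b' → h (q b) ≤ h (q b')))) := by
  subst hR
  have refl : Reflexive (Relation.TransGen
      (fun c c' : C => ∃ b b' : B, b ≤ b' ∧ c = q b ∧ c' = q b')) := by
    intro c
    obtain ⟨b, rfl⟩ := hq c
    exact Relation.TransGen.single ⟨b, b, le_refl b, rfl, rfl⟩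
  -- multiplying a single step by a fixed element on the right/left
  have mulR : ∀ x x' y : C,
      Relation.TransGen (fun c c' : C => ∃ b b' : B, b ≤ b' ∧ c = q b ∧ c' = q b') x x' →
      Relation.TransGen (fun c c' : C => ∃ b b' : B, b ≤ b' ∧ c = q b ∧ c' = q b')
        (x * y) (x' * y) := by
    intro x x' y hxy
    obtain ⟨e, rfl⟩ := hq y
    induction hxy with
    | single h =>
      obtain ⟨b, b', hle, rfl, rfl⟩ := h
      exact Relation.TransGen.single
        ⟨b * e, b' * e, hcompB _ _ _ _ hle (le_refl e), (map_mul q b e).symm, (map_mul q b' e).symm⟩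
    | tail _ h ih =>
      obtain ⟨b, b', hle, rfl, rfl⟩ := h
      exact ih.tail
        ⟨b * e, b' * e, hcompB _ _ _ _ hle (le_refl e), (map_mul q b e).symm, (map_mul q b' e).symm⟩
  have mulL : ∀ x y y' : C,
      Relation.TransGen (fun c c' : C => ∃ b b' : B, b ≤ b' ∧ c = q b ∧ c' = q b') y y' →
      Relation.TransGen (fun c c' : C => ∃ b b' : B, b ≤ b' ∧ c = q b ∧ c' = q b')
        (x * y) (x * y') := by
    intro x y y' hyy
    obtain ⟨e, rfl⟩ := hq x
    induction hyy with
    | single h =>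
      obtain ⟨b, b', hle, rfl, rfl⟩ := h
      exact Relation.TransGen.single
        ⟨e * b, e * b', hcompB _ _ _ _ (le_refl e) hle, (map_mul q e b).symm, (map_mul q e b').symm⟩
    | tail _ h ih =>
      obtain ⟨b, b', hle, rfl, rfl⟩ := h
      exact ih.tail
        ⟨e * b, e * b', hcompB _ _ _ _ (le_refl e) hle, (map_mul q e b).symm, (map_mul q e b').symm⟩
  refine ⟨refl, fun _ _ _ h h' => h.trans h', ?_, ?_, ?_⟩
  · intro x x' y y' hx hy
    exact (mulR x x' y hx).trans (mulL x' y y' hy)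
  · intro b b' hle
    exact Relation.TransGen.single ⟨b, b', hle, rfl, rfl⟩
  · intro D _ _ _ h
    constructor
    · intro hm b b' hle
      exact hm _ _ (Relation.TransGen.single ⟨b, b', hle, rfl, rfl⟩)
    · intro hm c c' hcc
      induction hcc with
      | single hstep =>
        obtain ⟨b, b', hle, rfl, rfl⟩ := hstep
        exact hm b b' hle
      | tail _ hstep ih =>
        obtain ⟨b, b', hle, rfl, rfl⟩ := hstep
        exact ih.trans (hm b b' hle)
end
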